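/- arXiv:0905.3509 — 2 statements merged into one kernel-verified Lean document; each statement's English description precedes it below -/
import Mathlib

section
/- Let A be a C*-algebra, X a semi-inner product A-module, and x, y ∈ X. If |y| = ⟨y,y⟩^{1/2} belongs to the center of A (i.e. commutes with every element of A), then the strengthened Cauchy–Schwarz inequality ⟨x,y⟩⟨y,x⟩ ≤ ⟨x,x⟩⟨y,y⟩ holds in A. -/
/-!
Write `t = ⟨y,x⟩` and `b = |y|`. For self-adjoint `w`, expanding
`0 ≤ ⟨x b - y (w t), x b - y (w t)⟩` and moving the central `b` past `⟨x,x⟩`, `t` and `t*` gives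
`t* t ≤ ⟨x,x⟩⟨y,y⟩ + s* s` with `s = t - b w t`. For `w = b (b² + ε)⁻¹` we have
`s = ⟨y - y (b w), x⟩`, so the norm Cauchy–Schwarz inequality bounds `‖s‖²` by
`‖⟨x,x⟩‖ ‖b² (1 - b w)²‖ ≤ ‖⟨x,x⟩‖ ε / 4`, and `ε → 0` concludes since the positive cone is closed.
-/

/-- A semi-inner product `A`-module: a right `A`-module `X` (which is also a complex
vector space, with compatible actions) together with an `A`-valued semi-inner product. -/
structure SemiInnerProductModule (A : Type*) (X : Type*)
    [NonUnitalCStarAlgebra A] [PartialOrder A] [StarOrderedRing A]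
    [AddCommGroup X] [Module ℂ X] where
  /-- the right action of `A` on `X` -/
  rsmul : X → A → X
  /-- the `A`-valued semi-inner product -/
  inner : X → X → A
  add_rsmul : ∀ (x y : X) (a : A), rsmul (x + y) a = rsmul x a + rsmul y a
  rsmul_add : ∀ (x : X) (a b : A), rsmul x (a + b) = rsmul x a + rsmul x b
  rsmul_mul : ∀ (x : X) (a b : A), rsmul (rsmul x a) b = rsmul x (a * b)
  smul_rsmul : ∀ (c : ℂ) (x : X) (a : A), rsmul (c • x) a = c • rsmul x a
  rsmul_smul : ∀ (c : ℂ) (x : X) (a : A), rsmul x (c • a) = c • rsmul x a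
  inner_add : ∀ (x y z : X), inner x (y + z) = inner x y + inner x z
  inner_smul : ∀ (c : ℂ) (x y : X), inner x (c • y) = c • inner x y
  inner_rsmul : ∀ (x y : X) (a : A), inner x (rsmul y a) = inner x y * a
  star_inner : ∀ (x y : X), star (inner x y) = inner y x
  inner_self_nonneg : ∀ x : X, 0 ≤ inner x x

/-- Positivity of a matrix as an element of the C⋆-algebra `Mₙ(A)`:
a matrix is positive iff it is of the form `bᴴ * b`. -/
def Matrix.IsPosElem {A : Type*} {n : ℕ} [NonUnitalCStarAlgebra A]
    (M : Matrix (Fin n) (Fin n) A) : Prop :=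
  ∃ b : Matrix (Fin n) (Fin n) A, M = b.conjTranspose * b

lemma le_of_forall_le_add_of_norm_le {E : Type*} [SeminormedAddCommGroup E] [PartialOrder E]
    [ClosedIciTopology E] {a b : E} (K : ℝ) (h : ∀ ε > 0, ∃ q : E, ‖q‖ ≤ K * ε ∧ a ≤ b + q) :
    a ≤ b := by
  refine isClosed_Ici.closure_subset (Metric.mem_closure_iff.mpr fun δ hδ => ?_)
  obtain ⟨q, hq, hle⟩ := h (δ / (|K| + 1)) (by positivity)
  refine ⟨b + q, hle, ?_⟩
  rw [dist_eq_norm, sub_add_cancel_left, norm_neg]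
  calc ‖q‖ ≤ K * (δ / (|K| + 1)) := hq
    _ < δ := by
      rw [mul_div_assoc', div_lt_iff₀ (by positivity)]
      nlinarith [le_abs_self K]

section RegularizedInv

variable {A : Type*} [NonUnitalCStarAlgebra A]

noncomputable def regularizedInv (b : A) (ε : ℝ) : A := cfcₙ (fun σ : ℝ => σ / (σ ^ 2 + ε)) b

lemma norm_mul_self_sub_mul_regularizedInv_le {b : A} (hb : IsSelfAdjoint b) {ε : ℝ} (hε : 0 < ε) :
    ‖b * b - b * b * (b * regularizedInv b ε) - b * regularizedInv b ε * (b * b)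
      + b * regularizedInv b ε * (b * b) * (b * regularizedInv b ε)‖ ≤ ε / 4 := by
  set f : ℝ → ℝ := fun σ => σ / (σ ^ 2 + ε) with hf_def
  have hf : Continuous f := continuous_id.div (by fun_prop) fun σ => by positivity
  have he : b * regularizedInv b ε = cfcₙ (fun σ : ℝ => σ * f σ) b := by
    rw [regularizedInv, cfcₙ_mul (fun σ : ℝ => σ) f b, cfcₙ_id' ℝ b]
  have hc : b * b = cfcₙ (fun σ : ℝ => σ * σ) b := by
    rw [cfcₙ_mul (fun σ : ℝ => σ) (fun σ : ℝ => σ) b, cfcₙ_id' ℝ b]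
  rw [he, hc, ← cfcₙ_mul _ _ b, ← cfcₙ_mul _ _ b, ← cfcₙ_mul _ _ b, ← cfcₙ_sub _ _ b,
    ← cfcₙ_sub _ _ b, ← cfcₙ_add _ _ b]
  refine norm_cfcₙ_le fun σ _ => ?_
  have hval : σ * σ - σ * σ * (σ * f σ) - σ * f σ * (σ * σ) + σ * f σ * (σ * σ) * (σ * f σ)
      = σ ^ 2 * ε ^ 2 / (σ ^ 2 + ε) ^ 2 := by
    simp only [hf_def]
    field_simp
    ring
  rw [hval, Real.norm_of_nonneg (by positivity), div_le_div_iff₀ (by positivity) (by norm_num)]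
  nlinarith [mul_nonneg hε.le (sq_nonneg (σ ^ 2 - ε))]

end RegularizedInv

namespace SemiInnerProductModule

variable {A X : Type*} [NonUnitalCStarAlgebra A] [PartialOrder A] [StarOrderedRing A]
  [AddCommGroup X] [Module ℂ X] (P : SemiInnerProductModule A X)

lemma inner_sub_right (x y z : X) : P.inner x (y - z) = P.inner x y - P.inner x z :=
  (AddMonoidHom.mk' (P.inner x) (P.inner_add x)).map_sub y z

lemma inner_sub_left (x y z : X) : P.inner (x - y) z = P.inner x z - P.inner y z := by
  rw [← P.star_inner, P.inner_sub_right, star_sub, P.star_inner, P.star_inner]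

lemma inner_rsmul_left (x y : X) (a : A) : P.inner (P.rsmul x a) y = star a * P.inner x y := by
  rw [← P.star_inner, P.inner_rsmul, star_mul, P.star_inner]

lemma smul_inner_mul_inner_le (x y : X) {s : ℝ} (hs : 0 ≤ s) (hsx : s * ‖P.inner x x‖ ≤ 1) :
    s • (P.inner y x * P.inner x y) ≤ P.inner y y := by
  obtain ⟨t, hyx⟩ : ∃ t, P.inner y x = t := ⟨_, rfl⟩
  have hxy : P.inner x y = star t := by rw [← hyx, P.star_inner]
  rw [hyx, hxy]
  have h₀ : 0 ≤ (s * s) • (t * P.inner x x * star t) - s • (t * star t) - s • (t * star t)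
      + P.inner y y := by
    convert P.inner_self_nonneg (P.rsmul x (s • star t) - y) using 1
    simp only [inner_sub_left, inner_sub_right, inner_rsmul_left, P.inner_rsmul, hxy, star_smul,
      star_trivial, star_star, smul_mul_assoc, mul_smul_comm, sub_mul, hyx]
    module
  have hconj : (s * s) • (t * P.inner x x * star t) ≤ s • (t * star t) := calc
    _ ≤ (s * s) • (‖P.inner x x‖ • (t * star t)) := by
      gcongr
      exact CStarAlgebra.star_right_conjugate_le_norm_smul (P.inner_self_nonneg x).isSelfAdjoint
    _ = (s * (s * ‖P.inner x x‖)) • (t * star t) := by rw [smul_smul, mul_assoc]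
    _ ≤ s • (t * star t) := by
      gcongr
      · exact mul_star_self_nonneg t
      · nlinarith
  rw [← sub_nonneg]
  calc (0 : A) ≤ _ := h₀
    _ ≤ s • (t * star t) - s • (t * star t) - s • (t * star t) + P.inner y y := by gcongr
    _ = _ := by module

lemma norm_inner_sq_le (x y : X) : ‖P.inner x y‖ ^ 2 ≤ ‖P.inner x x‖ * ‖P.inner y y‖ := by
  have hscaled : ∀ s : ℝ, 0 ≤ s → s * ‖P.inner x x‖ ≤ 1 →
      s * ‖P.inner x y‖ ^ 2 ≤ ‖P.inner y y‖ := by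
    intro s hs hsx
    have hle := P.smul_inner_mul_inner_le x y hs hsx
    rw [← P.star_inner x y] at hle
    calc s * ‖P.inner x y‖ ^ 2 = ‖s • (star (P.inner x y) * P.inner x y)‖ := by
          rw [norm_smul, CStarRing.norm_star_mul_self, Real.norm_of_nonneg hs, sq]
      _ ≤ ‖P.inner y y‖ :=
          CStarAlgebra.norm_le_norm_of_nonneg_of_le (smul_nonneg hs (star_mul_self_nonneg _)) hle
  rcases (norm_nonneg (P.inner x x)).eq_or_lt with hx | hx
  · rw [← hx, zero_mul]
    by_contra! hpos
    have h := hscaled ((‖P.inner y y‖ + 1) / ‖P.inner x y‖ ^ 2) (by positivity) (by simp [← hx])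
    rw [div_mul_cancel₀ _ hpos.ne'] at h
    linarith
  · have h := hscaled ‖P.inner x x‖⁻¹ (by positivity) (inv_mul_cancel₀ hx.ne').le
    rwa [inv_mul_le_iff₀ hx] at h

lemma inner_mul_inner_le_add_of_commute (x y : X) {b w : A} (hb : ∀ a, Commute b a)
    (hbsa : IsSelfAdjoint b) (hwsa : IsSelfAdjoint w) (hbb : b * b = P.inner y y) :
    P.inner x y * P.inner y x ≤ P.inner x x * P.inner y y
      + star (P.inner y x - b * w * P.inner y x) * (P.inner y x - b * w * P.inner y x) := by
  obtain ⟨t, hyx⟩ : ∃ t, P.inner y x = t := ⟨_, rfl⟩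
  have hxy : P.inner x y = star t := by rw [← hyx, P.star_inner]
  rw [hyx, hxy, ← sub_nonneg, ← hbb]
  convert P.inner_self_nonneg (P.rsmul x b - P.rsmul y (w * t)) using 1
  simp only [inner_sub_left, inner_sub_right, inner_rsmul_left, P.inner_rsmul, hyx, hxy, ← hbb,
    star_mul, star_sub, hbsa.star_eq, hwsa.star_eq]
  rw [← sub_eq_zero]
  calc _ = (P.inner x x * b - b * P.inner x x) * b + (b * star t - star t * b) * w * t
        + star t * w * (t * b - b * t) := by noncomm_ring
    _ = 0 := by simp only [(hb _).eq, sub_self, zero_mul, mul_zero, add_zero]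

lemma norm_inner_sub_mul_sq_le (x y : X) {e : A} (he : IsSelfAdjoint e) :
    ‖P.inner y x - e * P.inner y x‖ ^ 2 ≤ ‖P.inner x x‖ *
      ‖P.inner y y - P.inner y y * e - e * P.inner y y + e * P.inner y y * e‖ := by
  have h := P.norm_inner_sq_le (y - P.rsmul y e) x
  simp only [inner_sub_left, inner_sub_right, inner_rsmul_left, P.inner_rsmul, he.star_eq] at h
  rw [mul_comm]
  convert h using 3
  noncomm_ring

end SemiInnerProductModule

/-- If `|y| = ⟨y,y⟩^(1/2)` lies in the center of `A`, then the strengthened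
Cauchy–Schwarz inequality `⟨x,y⟩⟨y,x⟩ ≤ ⟨x,x⟩⟨y,y⟩` holds. -/
theorem inner_mul_inner_le_of_central {A X : Type*}
    [NonUnitalCStarAlgebra A] [PartialOrder A] [StarOrderedRing A]
    [AddCommGroup X] [Module ℂ X]
    (P : SemiInnerProductModule A X) (x y : X)
    (hcentral : ∀ a : A, CFC.sqrt (P.inner y y) * a = a * CFC.sqrt (P.inner y y)) :
    P.inner x y * P.inner y x ≤ P.inner x x * P.inner y y := by
  set b := CFC.sqrt (P.inner y y)
  have hbsa : IsSelfAdjoint b := (CFC.sqrt_nonneg _).isSelfAdjoint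
  have hbb : b * b = P.inner y y := CFC.sqrt_mul_sqrt_self _ (P.inner_self_nonneg y)
  refine le_of_forall_le_add_of_norm_le (‖P.inner x x‖ / 4) fun ε hε => ?_
  have hw : IsSelfAdjoint (regularizedInv b ε) := cfcₙ_predicate _ b
  have he : IsSelfAdjoint (b * regularizedInv b ε) := (hbsa.commute_iff hw).mp (hcentral _)
  refine ⟨_, ?_, P.inner_mul_inner_le_add_of_commute x y hcentral hbsa hw hbb⟩
  calc _ = ‖P.inner y x - b * regularizedInv b ε * P.inner y x‖ ^ 2 := by
        rw [CStarRing.norm_star_mul_self, sq]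
    _ ≤ ‖P.inner x x‖ * (ε / 4) := by
        refine (P.norm_inner_sub_mul_sq_le x y he).trans ?_
        rw [← hbb]
        gcongr
        exact norm_mul_self_sub_mul_regularizedInv_le hbsa hε
    _ = ‖P.inner x x‖ / 4 * ε := by ring
end

section
/- Let a be a positive bounded linear operator on a complex Hilbert space H. Then there exists m ∈ ℕ such that f_m(a) = 0 if and only if the spectrum of a is a finite set. -/
section Sequences

variable {A : Type*} [CStarAlgebra A]

/-- The sequence `f₀(a) = a`, `f_{m+1}(a) = f_m(a)·(‖f_m(a)‖·1 − f_m(a))`. -/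
noncomputable def fSeq (a : A) : ℕ → A
  | 0 => a
  | m + 1 => fSeq a m * (‖fSeq a m‖ • (1 : A) - fSeq a m)

/-- The sequence `g_m(a) = ‖f_m(a)‖·1 − f_m(a)`. -/
noncomputable def gSeq (a : A) (m : ℕ) : A := ‖fSeq a m‖ • (1 : A) - fSeq a m

open Classical in
/-- The sequence `p_m(a)`: as long as `f_m(a) ≠ 0`,
`p_m(a) = (1/‖f₀(a)‖)·1 + Σ_{l=1}^m (∏_{k=0}^{l-1} g_k(a)²)/(∏_{k=0}^{l} ‖f_k(a)‖)`,
and `p_j(a) = p_M(a)` for `j > M`, where `M` is the last index with `f_M(a) ≠ 0`. -/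
noncomputable def pSeq (a : A) : ℕ → A
  | 0 => ‖a‖⁻¹ • (1 : A)
  | m + 1 =>
    if fSeq a (m + 1) = 0 then pSeq a m
    else pSeq a m +
      (((List.range (m + 2)).map fun k => ‖fSeq a k‖).prod)⁻¹ •
        ((List.range (m + 1)).map fun k => gSeq a k ^ 2).prod

end Sequences

noncomputable def fPoly {H : Type*} [NormedAddCommGroup H] [InnerProductSpace ℂ H]
    [CompleteSpace H] (a : H →L[ℂ] H) : ℕ → Polynomial ℝ
  | 0 => Polynomial.X
  | m + 1 => fPoly a m * (Polynomial.C ‖fSeq a m‖ - fPoly a m)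

section Aux
open Polynomial
variable {H : Type*} [NormedAddCommGroup H] [InnerProductSpace ℂ H] [CompleteSpace H]
  (a : H →L[ℂ] H)

lemma fPoly_prop (m : ℕ) : (fPoly a m).natDegree = 2 ^ m ∧
    ((fPoly a m).leadingCoeff = 1 ∨ (fPoly a m).leadingCoeff = -1) := by
  induction m with
  | zero => simp [fPoly]
  | succ m ih =>
    obtain ⟨hd, hl⟩ := ih
    have hdeg : (Polynomial.C ‖fSeq a m‖).degree < (fPoly a m).degree := by
      apply lt_of_le_of_lt (degree_C_le)
      rw [← Polynomial.natDegree_pos_iff_degree_pos, hd]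
      positivity
    have hlq : (Polynomial.C ‖fSeq a m‖ - fPoly a m).leadingCoeff = -(fPoly a m).leadingCoeff :=
      Polynomial.leadingCoeff_sub_of_degree_lt' hdeg
    have hp0 : fPoly a m ≠ 0 := by
      intro h
      rcases hl with h1 | h1 <;> rw [h, leadingCoeff_zero] at h1 <;> norm_num at h1
    have hq0 : Polynomial.C ‖fSeq a m‖ - fPoly a m ≠ 0 := by
      intro h
      rw [Polynomial.leadingCoeff_eq_zero.mpr h, eq_comm, neg_eq_zero,
        Polynomial.leadingCoeff_eq_zero] at hlq
      exact hp0 hlq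
    constructor
    · show (fPoly a m * _).natDegree = _
      rw [Polynomial.natDegree_mul hp0 hq0,
        Polynomial.natDegree_sub_eq_right_of_natDegree_lt, hd]
      · ring
      · rw [natDegree_C, hd]; positivity
    · show (fPoly a m * _).leadingCoeff = 1 ∨ (fPoly a m * _).leadingCoeff = -1
      rw [Polynomial.leadingCoeff_mul, hlq]
      rcases hl with h1 | h1 <;> rw [h1] <;> norm_num

lemma fPoly_ne_zero (m : ℕ) : fPoly a m ≠ 0 := by
  intro h
  rcases (fPoly_prop a m).2 with h1 | h1 <;>
    rw [h, leadingCoeff_zero] at h1 <;> norm_num at h1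

lemma fSeq_eq_cfc (ha : IsSelfAdjoint a) (m : ℕ) :
    fSeq a m = cfc (fun t : ℝ => (fPoly a m).eval t) a := by
  induction m with
  | zero => simp [fSeq, fPoly, cfc_id' ℝ a]
  | succ m ih =>
    have hc : (‖fSeq a m‖ • (1 : H →L[ℂ] H)) = cfc (fun _ : ℝ => ‖fSeq a m‖) a := by
      rw [cfc_const _ a ha, Algebra.algebraMap_eq_smul_one]
    have hcont : ContinuousOn (fun t : ℝ => (fPoly a m).eval t) (spectrum ℝ a) :=
      (fPoly a m).continuousOn
    have key : ∀ c : ℝ, fSeq a m * (c • (1 : H →L[ℂ] H) - fSeq a m) =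
        cfc (fun t : ℝ => (fPoly a m * (Polynomial.C c - fPoly a m)).eval t) a := by
      intro c
      have hc : c • (1 : H →L[ℂ] H) = cfc (fun _ : ℝ => c) a := by
        rw [cfc_const c a ha, Algebra.algebraMap_eq_smul_one]
      rw [ih, hc, ← cfc_sub _ _ a (by fun_prop) hcont, ← cfc_mul _ _ a hcont (by fun_prop)]
      exact cfc_congr fun x _ => by simp
    exact key ‖fSeq a m‖

lemma spec_fSeq (ha : IsSelfAdjoint a) (m : ℕ) :
    spectrum ℝ (fSeq a m) = (fun t : ℝ => (fPoly a m).eval t) '' spectrum ℝ a := by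
  rw [fSeq_eq_cfc a ha m, cfc_map_spectrum _ a ha ((fPoly a m).continuousOn)]

variable [Nontrivial H]

lemma eval_fPoly_le (ha : IsSelfAdjoint a) (m : ℕ) {x : ℝ} (hx : x ∈ spectrum ℝ a) :
    (fPoly a m).eval x ≤ ‖fSeq a m‖ := by
  have : (fPoly a m).eval x ∈ spectrum ℝ (fSeq a m) := by
    rw [spec_fSeq a ha m]; exact ⟨x, hx, rfl⟩
  exact (Real.le_norm_self _).trans (spectrum.norm_le_norm_of_mem this)

lemma eval_fPoly_nonneg (ha : 0 ≤ a) (m : ℕ) {x : ℝ} (hx : x ∈ spectrum ℝ a) :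
    0 ≤ (fPoly a m).eval x := by
  induction m with
  | zero => simpa [fPoly] using spectrum_nonneg_of_nonneg ha hx
  | succ m ih =>
    have h1 : (fPoly a m).eval x ≤ ‖fSeq a m‖ := eval_fPoly_le a (.of_nonneg ha) m hx
    show 0 ≤ (fPoly a m * (Polynomial.C ‖fSeq a m‖ - fPoly a m)).eval x
    rw [Polynomial.eval_mul, Polynomial.eval_sub, Polynomial.eval_C]
    exact mul_nonneg ih (by linarith)

lemma fSeq_nonneg (ha : 0 ≤ a) (m : ℕ) : 0 ≤ fSeq a m := by
  rw [fSeq_eq_cfc a (.of_nonneg ha) m]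
  exact cfc_nonneg fun x hx => eval_fPoly_nonneg a ha m hx

end Aux


/-- For a positive bounded operator `a` on a complex Hilbert space, `f_m(a) = 0` for
some `m` if and only if the spectrum of `a` is finite. -/
theorem fSeq_eq_zero_iff_spectrum_finite {H : Type*}
    [NormedAddCommGroup H] [InnerProductSpace ℂ H] [CompleteSpace H]
    (a : H →L[ℂ] H) (ha : 0 ≤ a) :
    (∃ m : ℕ, fSeq a m = 0) ↔ (spectrum ℂ a).Finite := by
  classical
  have hsa : IsSelfAdjoint a := .of_nonneg ha
  obtain hH | hH := subsingleton_or_nontrivial H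
  · have hsub : Subsingleton (H →L[ℂ] H) := ⟨fun f g => by ext x; exact Subsingleton.elim _ _⟩
    constructor
    · intro _
      have : spectrum ℂ a = ∅ := by
        rw [Set.eq_empty_iff_forall_notMem]
        intro z hz
        exact (spectrum.mem_iff.mp hz) (isUnit_of_subsingleton _)
      rw [this]; exact Set.finite_empty
    · intro _; exact ⟨0, Subsingleton.elim _ _⟩
  · constructor
    · rintro ⟨m, hm⟩
      have hroots : spectrum ℝ a ⊆ {x : ℝ | (fPoly a m).IsRoot x} := by
        intro x hx
        have h1 : (fPoly a m).eval x ∈ spectrum ℝ (fSeq a m) := by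
          rw [spec_fSeq a hsa m]; exact ⟨x, hx, rfl⟩
        rw [hm, spectrum.zero_eq] at h1
        simpa [Polynomial.IsRoot] using h1
      have hfin : (spectrum ℝ a).Finite :=
        (Polynomial.finite_setOf_isRoot (fPoly_ne_zero a m)).subset hroots
      rw [← hsa.spectrumRestricts.algebraMap_image]
      exact hfin.image _
    · intro hfin
      have hsfin : (spectrum ℝ a).Finite := by
        rw [← hsa.spectrumRestricts.image]
        exact hfin.image _
      by_contra hc
      push_neg at hc
      set F : ℕ → Finset ℝ :=
        fun m => hsfin.toFinset.filter (fun x => (fPoly a m).eval x ≠ 0) with hF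
      have key : ∀ m, (F (m + 1)).card < (F m).card := by
        intro m
        apply Finset.card_lt_card
        constructor
        · intro x hx
          simp only [hF, Finset.mem_filter, Set.Finite.mem_toFinset] at hx ⊢
          refine ⟨hx.1, fun h0 => hx.2 ?_⟩
          show (fPoly a m * (Polynomial.C ‖fSeq a m‖ - fPoly a m)).eval x = 0
          simp [h0]
        · intro hsub
          -- the maximizer is killed
          have hnorm : ‖fSeq a m‖ ∈ spectrum ℝ (fSeq a m) :=
            CStarAlgebra.norm_mem_spectrum_of_nonneg (fSeq_nonneg a ha m)
          rw [spec_fSeq a hsa m] at hnorm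
          obtain ⟨x, hx, hxe'⟩ := hnorm
          have hxe : (fPoly a m).eval x = ‖fSeq a m‖ := hxe'
          have hpos : (0 : ℝ) < ‖fSeq a m‖ := norm_pos_iff.mpr (hc m)
          have hxF : x ∈ F m := by
            simp only [hF, Finset.mem_filter, Set.Finite.mem_toFinset]
            exact ⟨hx, by rw [hxe]; exact ne_of_gt hpos⟩
          have hxF' : x ∈ F (m + 1) := hsub hxF
          simp only [hF, Finset.mem_filter] at hxF'
          apply hxF'.2
          show (fPoly a m * (Polynomial.C ‖fSeq a m‖ - fPoly a m)).eval x = 0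
          simp [hxe]
      have hdec : ∀ m, (F m).card + m ≤ (F 0).card := by
        intro m
        induction m with
        | zero => simp
        | succ m ih => have := key m; omega
      have := hdec ((F 0).card + 1)
      omega
end
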